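/- arXiv:2404.18160 — 4 statements merged into one kernel-verified Lean document; each statement's English description precedes it below -/
import Mathlib

section
/- A linear map ψ : M_m(ℂ) → M_n(ℂ) is completely (U_A,U_B)-positive if and only if there exist m×n matrices R_1,...,R_l such that ψ(V) = Σ_i U_B R_i* U_A* V R_i for all V (Kraus U-decomposition). -/
open Matrix Kronecker BigOperators ComplexOrder

noncomputable section

/-- Blockwise (`l`-fold) amplification of a map between matrix algebras. -/
def blockMap {m n : ℕ} (ψ : Matrix (Fin m) (Fin m) ℂ → Matrix (Fin n) (Fin n) ℂ)
    (l : ℕ) (V : Matrix (Fin l × Fin m) (Fin l × Fin m) ℂ) :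
    Matrix (Fin l × Fin n) (Fin l × Fin n) ℂ :=
  Matrix.of fun p q => ψ (Matrix.of fun a b => V (p.1, a) (q.1, b)) p.2 q.2

/-- A map between matrix algebras is completely positive if all its
amplifications preserve positive semidefiniteness. -/
def IsCompletelyPositive {m n : ℕ}
    (φ : Matrix (Fin m) (Fin m) ℂ → Matrix (Fin n) (Fin n) ℂ) : Prop :=
  ∀ (l : ℕ) (V : Matrix (Fin l × Fin m) (Fin l × Fin m) ℂ),
    V.PosSemidef → (blockMap φ l V).PosSemidef

/-- `ψ` is completely `(U_A, U_B)`-positive: for every `l`, whenever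
`(1 ⊗ U_A)* V` is positive semidefinite, so is `(1 ⊗ U_B)* ψ^{(l)}(V)`. -/
def IsCompletelyUPos {m n : ℕ} (UA : Matrix (Fin m) (Fin m) ℂ)
    (UB : Matrix (Fin n) (Fin n) ℂ)
    (ψ : Matrix (Fin m) (Fin m) ℂ → Matrix (Fin n) (Fin n) ℂ) : Prop :=
  ∀ (l : ℕ) (V : Matrix (Fin l × Fin m) (Fin l × Fin m) ℂ),
    (((1 : Matrix (Fin l) (Fin l) ℂ) ⊗ₖ UA)ᴴ * V).PosSemidef →
    (((1 : Matrix (Fin l) (Fin l) ℂ) ⊗ₖ UB)ᴴ * blockMap ψ l V).PosSemidef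

lemma one_kron_conjT {l m n : ℕ} (A : Matrix (Fin m) (Fin n) ℂ) :
    ((1 : Matrix (Fin l) (Fin l) ℂ) ⊗ₖ A)ᴴ = 1 ⊗ₖ Aᴴ := by
  ext ⟨p, a⟩ ⟨q, b⟩
  simp [Matrix.one_apply, eq_comm, apply_ite (starRingEnd ℂ)]

lemma one_kron_mul {l m : ℕ} (A : Matrix (Fin m) (Fin m) ℂ)
    (V : Matrix (Fin l × Fin m) (Fin l × Fin m) ℂ) :
    ((1 : Matrix (Fin l) (Fin l) ℂ) ⊗ₖ A) * V = blockMap (fun X => A * X) l V := by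
  ext ⟨p, a⟩ ⟨q, b⟩
  simp [blockMap, Matrix.mul_apply, Fintype.sum_prod_type, Matrix.one_apply, ite_mul]

lemma blockMap_comp {l m n k : ℕ} (f : Matrix (Fin n) (Fin n) ℂ → Matrix (Fin k) (Fin k) ℂ)
    (g : Matrix (Fin m) (Fin m) ℂ → Matrix (Fin n) (Fin n) ℂ)
    (V : Matrix (Fin l × Fin m) (Fin l × Fin m) ℂ) :
    blockMap f l (blockMap g l V) = blockMap (fun X => f (g X)) l V := rfl

lemma blockMap_sum {l m n : ℕ} {ι : Type*} (s : Finset ι)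
    (f : ι → Matrix (Fin m) (Fin m) ℂ → Matrix (Fin n) (Fin n) ℂ)
    (V : Matrix (Fin l × Fin m) (Fin l × Fin m) ℂ) :
    blockMap (fun X => ∑ i ∈ s, f i X) l V = ∑ i ∈ s, blockMap (f i) l V := by
  ext ⟨p, a⟩ ⟨q, b⟩
  simp [blockMap, Matrix.sum_apply]

lemma conj_kron {l m n : ℕ} (R : Matrix (Fin m) (Fin n) ℂ)
    (W : Matrix (Fin l × Fin m) (Fin l × Fin m) ℂ) :
    ((1 : Matrix (Fin l) (Fin l) ℂ) ⊗ₖ R)ᴴ * W * ((1 : Matrix (Fin l) (Fin l) ℂ) ⊗ₖ R)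
      = blockMap (fun X => Rᴴ * X * R) l W := by
  ext ⟨p, a⟩ ⟨q, b⟩
  simp [blockMap, Matrix.mul_apply, Fintype.sum_prod_type, Matrix.one_apply, ite_mul, mul_ite,
    Finset.mul_sum, Finset.sum_mul, apply_ite (starRingEnd ℂ), Finset.sum_ite_eq, Finset.sum_ite_eq']

lemma exists_kraus {m n : ℕ} (φ : Matrix (Fin m) (Fin m) ℂ →ₗ[ℂ] Matrix (Fin n) (Fin n) ℂ)
    (h : ∀ V : Matrix (Fin m × Fin m) (Fin m × Fin m) ℂ, V.PosSemidef →
      (blockMap ⇑φ m V).PosSemidef) :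
    ∃ R : (Fin m × Fin n) → Matrix (Fin m) (Fin n) ℂ,
      ∀ V, φ V = ∑ k, (R k)ᴴ * V * R k := by
  classical
  set V₀ : Matrix (Fin m × Fin m) (Fin m × Fin m) ℂ :=
    Matrix.of fun p q => if p.1 = p.2 ∧ q.1 = q.2 then 1 else 0 with hV₀def
  have hV₀ : V₀.PosSemidef := by
    refine Matrix.PosSemidef.of_dotProduct_mulVec_nonneg ?_ ?_
    · ext ⟨i, a⟩ ⟨j, b⟩
      simp only [hV₀def, conjTranspose_apply, of_apply, apply_ite (starRingEnd ℂ),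
        _root_.map_one, _root_.map_zero]
      by_cases h1 : i = a <;> by_cases h2 : j = b <;> simp [h1, h2]
    · intro x
      have h1 : V₀ *ᵥ x = fun p => if p.1 = p.2 then (∑ r : Fin m, x (r, r)) else 0 := by
        funext ⟨i, a⟩
        simp only [mulVec, dotProduct, hV₀def, of_apply, Fintype.sum_prod_type, ite_mul, one_mul,
          zero_mul]
        by_cases hia : i = a
        · simp only [hia, true_and, if_true]
          refine Finset.sum_congr rfl fun j _ => ?_
          simp [Finset.sum_ite_eq]
        · simp [hia]
      have key : dotProduct (star x) (V₀ *ᵥ x)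
          = star (∑ r : Fin m, x (r, r)) * (∑ r : Fin m, x (r, r)) := by
        rw [h1]
        simp only [dotProduct, Pi.star_apply, Fintype.sum_prod_type, mul_ite, mul_zero,
          star_sum, Finset.sum_mul]
        refine Finset.sum_congr rfl fun i _ => ?_
        simp [Finset.sum_ite_eq]
      rw [key]
      exact star_mul_self_nonneg _
  obtain ⟨B, hB⟩ : ∃ B : Matrix (Fin m × Fin n) (Fin m × Fin n) ℂ, blockMap ⇑φ m V₀ = Bᴴ * B := by
    open scoped MatrixOrder in
    obtain ⟨B, hB⟩ := CStarAlgebra.nonneg_iff_eq_star_mul_self.mp (h V₀ hV₀).nonneg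
    exact ⟨B, hB⟩
  refine ⟨fun k => Matrix.of fun i q => B k (i, q), fun V => ?_⟩
  have key : ∀ (i j : Fin m) (p q : Fin n), φ (single i j 1) p q
      = ∑ k, (starRingEnd ℂ) (B k (i, p)) * B k (j, q) := by
    intro i j p q
    have h2 : blockMap ⇑φ m V₀ (i, p) (j, q) = (Bᴴ * B) (i, p) (j, q) := by rw [← hB]
    simpa [blockMap, hV₀def, single, Matrix.mul_apply, conjTranspose_apply] using h2
  have hdec : V = ∑ i, ∑ j, (V i j) • single i j (1 : ℂ) := by
    conv_lhs => rw [matrix_eq_sum_single V]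
    simp
  ext p q
  conv_lhs => rw [hdec]
  simp only [map_sum, _root_.map_smul, Matrix.sum_apply, Matrix.smul_apply, smul_eq_mul, key,
    Matrix.mul_apply, conjTranspose_apply, of_apply, Finset.mul_sum, Finset.sum_mul]
  conv_lhs => enter [2, x]; rw [Finset.sum_comm]
  rw [Finset.sum_comm]
  refine Finset.sum_congr rfl fun k _ => ?_
  rw [Finset.sum_comm]
  refine Finset.sum_congr rfl fun i _ => ?_
  refine Finset.sum_congr rfl fun j _ => ?_
  rw [starRingEnd_apply]
  ring

lemma psd_sum {α : Type*} [Fintype α] {ι : Type*} (s : Finset ι) (f : ι → Matrix α α ℂ)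
    (h : ∀ i ∈ s, (f i).PosSemidef) : (∑ i ∈ s, f i).PosSemidef := by
  refine Finset.sum_induction f _ (fun a b ha hb => ?_) ⟨Matrix.isHermitian_zero, by simp⟩ h
  exact ha.add hb

/-- A linear map `ψ` is completely `(U_A, U_B)`-positive iff it has a
Kraus `U`-decomposition `ψ(V) = Σᵢ U_B Rᵢ* U_A* V Rᵢ`. -/
theorem compUPos_iff_krausU {m n : ℕ}
    (UA : Matrix (Fin m) (Fin m) ℂ) (UB : Matrix (Fin n) (Fin n) ℂ)
    (hUA : UA ∈ Matrix.unitaryGroup (Fin m) ℂ)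
    (hUB : UB ∈ Matrix.unitaryGroup (Fin n) ℂ)
    (ψ : Matrix (Fin m) (Fin m) ℂ →ₗ[ℂ] Matrix (Fin n) (Fin n) ℂ) :
    IsCompletelyUPos UA UB ⇑ψ ↔
      ∃ (l : ℕ) (R : Fin l → Matrix (Fin m) (Fin n) ℂ),
        ∀ V, ψ V = ∑ i, UB * (R i)ᴴ * UAᴴ * V * R i := by
  have hUA1 : UAᴴ * UA = 1 := by
    simpa [Matrix.star_eq_conjTranspose] using hUA.1
  have hUA2 : UA * UAᴴ = 1 := by
    simpa [Matrix.star_eq_conjTranspose] using hUA.2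
  have hUB1 : UBᴴ * UB = 1 := by
    simpa [Matrix.star_eq_conjTranspose] using hUB.1
  have hUB2 : UB * UBᴴ = 1 := by
    simpa [Matrix.star_eq_conjTranspose] using hUB.2
  constructor
  · intro h
    set φ : Matrix (Fin m) (Fin m) ℂ →ₗ[ℂ] Matrix (Fin n) (Fin n) ℂ :=
      { toFun := fun X => UBᴴ * ψ (UA * X)
        map_add' := fun X Y => by simp [Matrix.mul_add, map_add]
        map_smul' := fun c X => by simp [Matrix.mul_smul, _root_.map_smul] } with hφdef
    have hφ : ∀ W : Matrix (Fin m × Fin m) (Fin m × Fin m) ℂ, W.PosSemidef →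
        (blockMap ⇑φ m W).PosSemidef := by
      intro W hW
      have hblk : blockMap ⇑φ m W
          = ((1 : Matrix (Fin m) (Fin m) ℂ) ⊗ₖ UB)ᴴ
            * blockMap ⇑ψ m (((1 : Matrix (Fin m) (Fin m) ℂ) ⊗ₖ UA) * W) := by
        rw [one_kron_mul UA W, one_kron_conjT, one_kron_mul UBᴴ, blockMap_comp, blockMap_comp]
        rfl
      rw [hblk]
      refine h m _ ?_
      rw [← mul_assoc, one_kron_conjT, ← mul_kronecker_mul, Matrix.one_mul, hUA1,
        one_kronecker_one, Matrix.one_mul]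
      exact hW
    obtain ⟨R, hR⟩ := exists_kraus φ hφ
    refine ⟨m * n, fun i => R (finProdFinEquiv.symm i), fun V => ?_⟩
    have hψ : ψ V = UB * φ (UAᴴ * V) := by
      simp only [hφdef, LinearMap.coe_mk, AddHom.coe_mk, ← mul_assoc, hUB2, hUA2,
        Matrix.one_mul]
    rw [hψ, hR, Matrix.mul_sum,
      ← Equiv.sum_comp finProdFinEquiv.symm
        (fun k => UB * ((R k)ᴴ * (UAᴴ * V) * R k))]
    refine Finset.sum_congr rfl fun k _ => ?_
    simp only [← Matrix.mul_assoc]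
  · rintro ⟨l₀, R, hR⟩ l V hV
    have hψ' : ∀ X : Matrix (Fin m) (Fin m) ℂ,
        UBᴴ * ψ X = ∑ i, (R i)ᴴ * (UAᴴ * X) * R i := by
      intro X
      rw [hR X, Matrix.mul_sum]
      refine Finset.sum_congr rfl fun i _ => ?_
      rw [show UB * (R i)ᴴ * UAᴴ * X * R i = UB * ((R i)ᴴ * (UAᴴ * X) * R i) by
        simp only [Matrix.mul_assoc], ← Matrix.mul_assoc, hUB1, Matrix.one_mul]
    have hblk : ((1 : Matrix (Fin l) (Fin l) ℂ) ⊗ₖ UB)ᴴ * blockMap ⇑ψ l V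
        = ∑ i, ((1 : Matrix (Fin l) (Fin l) ℂ) ⊗ₖ R i)ᴴ
            * (((1 : Matrix (Fin l) (Fin l) ℂ) ⊗ₖ UA)ᴴ * V)
            * ((1 : Matrix (Fin l) (Fin l) ℂ) ⊗ₖ R i) := by
      have h3 : ∀ i : Fin l₀, ((1 : Matrix (Fin l) (Fin l) ℂ) ⊗ₖ R i)ᴴ
          * (((1 : Matrix (Fin l) (Fin l) ℂ) ⊗ₖ UA)ᴴ * V)
          * ((1 : Matrix (Fin l) (Fin l) ℂ) ⊗ₖ R i)
          = blockMap (fun X => (R i)ᴴ * (UAᴴ * X) * R i) l V := by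
        intro i
        rw [one_kron_conjT UA, one_kron_mul UAᴴ, conj_kron, blockMap_comp]
      simp only [h3]
      rw [one_kron_conjT UB, one_kron_mul UBᴴ, blockMap_comp, ← blockMap_sum]
      exact congrArg (fun f => blockMap f l V) (funext hψ')
    rw [hblk]
    refine psd_sum Finset.univ
      (fun i => ((1 : Matrix (Fin l) (Fin l) ℂ) ⊗ₖ R i)ᴴ
        * (((1 : Matrix (Fin l) (Fin l) ℂ) ⊗ₖ UA)ᴴ * V)
        * ((1 : Matrix (Fin l) (Fin l) ℂ) ⊗ₖ R i)) fun i _ => ?_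
    exact hV.conjTranspose_mul_mul_same _
end
end

section
/- Let ψ : M_m(ℂ) → M_n(ℂ) be linear and {e_ij} the matrix units of M_m(ℂ). Then ψ is completely (U_A,U_B)-positive if and only if the block matrix [U_B* ψ(U_A e_ij)]_{i,j=1}^m ∈ M_m(M_n(ℂ)) is positive semidefinite. -/
open Matrix Kronecker BigOperators ComplexOrder

noncomputable section

lemma sum_swap4 {α β γ δ M : Type*} [Fintype α] [Fintype β] [Fintype γ] [Fintype δ]
    [AddCommMonoid M] (f : α → β → γ → δ → M) :
    ∑ s, ∑ t, ∑ r, ∑ u, f s t r u = ∑ r, ∑ u, ∑ s, ∑ t, f s t r u := by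
  calc ∑ s, ∑ t, ∑ r, ∑ u, f s t r u
      = ∑ s, ∑ r, ∑ t, ∑ u, f s t r u := Finset.sum_congr rfl fun s _ => Finset.sum_comm
    _ = ∑ r, ∑ s, ∑ t, ∑ u, f s t r u := Finset.sum_comm
    _ = ∑ r, ∑ s, ∑ u, ∑ t, f s t r u :=
        Finset.sum_congr rfl fun r _ => Finset.sum_congr rfl fun s _ => Finset.sum_comm
    _ = ∑ r, ∑ u, ∑ s, ∑ t, f s t r u := Finset.sum_congr rfl fun r _ => Finset.sum_comm

lemma lin_entry {m n : ℕ} (φ : Matrix (Fin m) (Fin m) ℂ →ₗ[ℂ] Matrix (Fin n) (Fin n) ℂ)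
    (M : Matrix (Fin m) (Fin m) ℂ) (a b : Fin n) :
    φ M a b = ∑ s : Fin m, ∑ t : Fin m, M s t * φ (Matrix.single s t 1) a b := by
  conv_lhs => rw [matrix_eq_sum_single M]
  rw [map_sum, Matrix.sum_apply]
  refine Finset.sum_congr rfl fun s _ => ?_
  rw [map_sum, Matrix.sum_apply]
  refine Finset.sum_congr rfl fun t _ => ?_
  have : Matrix.single s t (M s t) = (M s t) • Matrix.single s t (1:ℂ) := by
    ext i j; simp [Matrix.single, Matrix.smul_apply, mul_ite]
  rw [this, _root_.map_smul, Matrix.smul_apply, smul_eq_mul]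

lemma kron_mul_entry {l k : ℕ} (U : Matrix (Fin k) (Fin k) ℂ)
    (M : Matrix (Fin l × Fin k) (Fin l × Fin k) ℂ) (p q : Fin l × Fin k) :
    (((1 : Matrix (Fin l) (Fin l) ℂ) ⊗ₖ U)ᴴ * M) p q
      = ∑ b : Fin k, (starRingEnd ℂ) (U b p.2) * M (p.1, b) q := by
  rw [Matrix.mul_apply, Fintype.sum_prod_type]
  simp [kroneckerMap_apply, Matrix.one_apply, apply_ite]

open scoped MatrixOrder in
lemma psd_eq_ctm {k : Type*} [Fintype k] [DecidableEq k] {M : Matrix k k ℂ}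
    (hM : M.PosSemidef) : ∃ B : Matrix k k ℂ, M = Bᴴ * B := by
  obtain ⟨X, hX, -, hXX⟩ :=
    CFC.exists_sqrt_of_isSelfAdjoint_of_quasispectrumRestricts hM.isHermitian
      (QuasispectrumRestricts.nnreal_of_nonneg hM.nonneg)
  exact ⟨X, by rw [← hXX, ← Matrix.star_eq_conjTranspose, hX.star_eq]⟩

/-- Choi's theorem for `U`-positivity: a linear map `ψ` is completely
`(U_A, U_B)`-positive iff the block matrix `[U_B* ψ(U_A e_ij)]` is positive
semidefinite. -/
theorem compUPos_iff_choiU_posSemidef {m n : ℕ}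
    (UA : Matrix (Fin m) (Fin m) ℂ) (UB : Matrix (Fin n) (Fin n) ℂ)
    (hUA : UA ∈ Matrix.unitaryGroup (Fin m) ℂ)
    (hUB : UB ∈ Matrix.unitaryGroup (Fin n) ℂ)
    (ψ : Matrix (Fin m) (Fin m) ℂ →ₗ[ℂ] Matrix (Fin n) (Fin n) ℂ) :
    IsCompletelyUPos UA UB ⇑ψ ↔
      (Matrix.of fun (p q : Fin m × Fin n) =>
        (UBᴴ * ψ (UA * Matrix.single p.1 q.1 1)) p.2 q.2).PosSemidef := by
  have hUA1 : UAᴴ * UA = 1 := hUA.1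
  have hUA2 : UA * UAᴴ = 1 := hUA.2
  constructor
  · intro h
    set V : Matrix (Fin m × Fin m) (Fin m × Fin m) ℂ :=
      Matrix.of fun p q => UA p.2 p.1 * (if q.1 = q.2 then 1 else 0) with hVdef
    set R : Matrix (Fin 1) (Fin m × Fin m) ℂ :=
      Matrix.of fun _ p => (if p.1 = p.2 then 1 else 0) with hRdef
    have hR : ((1 : Matrix (Fin m) (Fin m) ℂ) ⊗ₖ UA)ᴴ * V = Rᴴ * R := by
      ext p q
      rw [kron_mul_entry]
      have : ∀ b : Fin m, (starRingEnd ℂ) (UA b p.2) * V (p.1, b) q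
          = ((starRingEnd ℂ) (UA b p.2) * UA b p.1) * (if q.1 = q.2 then 1 else 0) := by
        intro b; simp only [hVdef, Matrix.of_apply]; ring
      rw [Finset.sum_congr rfl (fun b _ => this b), ← Finset.sum_mul]
      have h1 : ∑ b : Fin m, (starRingEnd ℂ) (UA b p.2) * UA b p.1 = (UAᴴ * UA) p.2 p.1 := by
        simp [Matrix.mul_apply, Matrix.conjTranspose_apply]
      rw [h1, hUA1]
      simp [Matrix.mul_apply, Matrix.one_apply, hRdef, Matrix.conjTranspose_apply, eq_comm]
    have hPSD := h m V (hR ▸ Matrix.posSemidef_conjTranspose_mul_self R)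
    have hmat : ∀ i j : Fin m,
        (Matrix.of fun a c => V (i, a) (j, c)) = UA * Matrix.single i j 1 := by
      intro i j; ext a c
      simp [hVdef, Matrix.mul_apply, Matrix.single, Matrix.of_apply, mul_ite, ite_and]
    have hCeq : (Matrix.of fun (p q : Fin m × Fin n) =>
        (UBᴴ * ψ (UA * Matrix.single p.1 q.1 1)) p.2 q.2)
        = ((1 : Matrix (Fin m) (Fin m) ℂ) ⊗ₖ UB)ᴴ * blockMap (⇑ψ) m V := by
      ext p q
      rw [kron_mul_entry]
      simp only [blockMap, Matrix.of_apply, hmat p.1 q.1]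
      rw [Matrix.mul_apply]
      simp [Matrix.conjTranspose_apply]
    rw [hCeq]; exact hPSD
  · intro hC l V hV
    have hUA2 : UA * UAᴴ = 1 := hUA.2
    set W : Matrix (Fin l × Fin m) (Fin l × Fin m) ℂ :=
      ((1 : Matrix (Fin l) (Fin l) ℂ) ⊗ₖ UA)ᴴ * V with hWdef
    have hkH : ((1 : Matrix (Fin l) (Fin l) ℂ) ⊗ₖ UA)ᴴ
        = (1 : Matrix (Fin l) (Fin l) ℂ) ⊗ₖ UAᴴ := by
      ext p q
      simp [Matrix.conjTranspose_apply, kroneckerMap_apply, Matrix.one_apply, apply_ite]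
      split_ifs with h
      · intro hh; exact absurd h.symm hh
      · intro hh; exact absurd hh.symm h
    have hU1 : ((1 : Matrix (Fin l) (Fin l) ℂ) ⊗ₖ UA)
        * ((1 : Matrix (Fin l) (Fin l) ℂ) ⊗ₖ UA)ᴴ = 1 := by
      rw [hkH, ← Matrix.mul_kronecker_mul, Matrix.one_mul, hUA2, Matrix.one_kronecker_one]
    have hVeq : V = ((1 : Matrix (Fin l) (Fin l) ℂ) ⊗ₖ UA) * W := by
      rw [hWdef, ← Matrix.mul_assoc, hU1, Matrix.one_mul]
    set φ : Matrix (Fin m) (Fin m) ℂ →ₗ[ℂ] Matrix (Fin n) (Fin n) ℂ :=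
      { toFun := fun X => UBᴴ * ψ (UA * X)
        map_add' := fun x y => by simp only [Matrix.mul_add, map_add]
        map_smul' := fun c x => by
          simp only [Matrix.mul_smul, _root_.map_smul, RingHom.id_apply] } with hφdef
    have hVblock : ∀ i j : Fin l,
        (Matrix.of fun s t => V (i, s) (j, t)) = UA * Matrix.of fun s t => W (i, s) (j, t) := by
      intro i j; ext s t
      rw [Matrix.of_apply, hVeq, Matrix.mul_apply, Fintype.sum_prod_type]
      simp [Matrix.mul_apply, kroneckerMap_apply, Matrix.one_apply, ite_mul]
    obtain ⟨A, hA⟩ := psd_eq_ctm hC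
    obtain ⟨B, hB⟩ := psd_eq_ctm hV
    set N : Matrix ((Fin l × Fin m) × (Fin m × Fin n)) (Fin l × Fin n) ℂ :=
      Matrix.of fun x jb => ∑ t : Fin m, B x.1 (jb.1, t) * A x.2 (t, jb.2) with hNdef
    have heq : (((1 : Matrix (Fin l) (Fin l) ℂ) ⊗ₖ UB)ᴴ * blockMap (⇑ψ) l V) = Nᴴ * N := by
      ext p q
      have step1 : (((1 : Matrix (Fin l) (Fin l) ℂ) ⊗ₖ UB)ᴴ * blockMap (⇑ψ) l V) p q
          = φ (Matrix.of fun s t => W (p.1, s) (q.1, t)) p.2 q.2 := by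
        rw [kron_mul_entry]
        show _ = (UBᴴ * ψ (UA * Matrix.of fun s t => W (p.1, s) (q.1, t))) p.2 q.2
        rw [← hVblock p.1 q.1, Matrix.mul_apply]
        simp [blockMap, Matrix.conjTranspose_apply]
      rw [step1, lin_entry]
      have hWent : ∀ (i j : Fin l) (s t : Fin m), W (i, s) (j, t)
          = ∑ r : Fin l × Fin m, (starRingEnd ℂ) (B r (i, s)) * B r (j, t) := by
        intro i j s t
        rw [hB]; simp [Matrix.mul_apply, Matrix.conjTranspose_apply]
      have hCent : ∀ (s t : Fin m) (a b : Fin n), φ (Matrix.single s t 1) a b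
          = ∑ u : Fin m × Fin n, (starRingEnd ℂ) (A u (s, a)) * A u (t, b) := by
        intro s t a b
        have h0 : φ (Matrix.single s t 1) a b
            = (Matrix.of fun (p q : Fin m × Fin n) =>
              (UBᴴ * ψ (UA * Matrix.single p.1 q.1 1)) p.2 q.2) (s, a) (t, b) := rfl
        rw [h0, hA]; simp [Matrix.mul_apply, Matrix.conjTranspose_apply]
      simp only [Matrix.of_apply, hWent, hCent, Finset.sum_mul_sum]
      rw [sum_swap4 (fun (s t : Fin m) (r : Fin l × Fin m) (u : Fin m × Fin n) =>
        (starRingEnd ℂ) (B r (p.1, s)) * B r (q.1, t)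
          * ((starRingEnd ℂ) (A u (s, p.2)) * A u (t, q.2)))]
      conv_rhs => rw [Matrix.mul_apply, Fintype.sum_prod_type]
      refine Finset.sum_congr rfl fun r _ => Finset.sum_congr rfl fun u _ => ?_
      simp only [Matrix.conjTranspose_apply, hNdef, Matrix.of_apply, star_sum, star_mul',
        Finset.sum_mul_sum, starRingEnd_apply]
      exact Finset.sum_congr rfl fun s _ => Finset.sum_congr rfl fun t _ => by ring
    rw [heq]
    exact Matrix.posSemidef_conjTranspose_mul_self N
end
end

section
/- Let ψ(X) = Σ_{i=1}^l U R_i* U* X R_i on M_m(ℂ) with U unitary and p ∈ ℕ. Then ψ^p(X) = 0 for all X ∈ M_m(ℂ) if and only if R_{i_1} R_{i_2} ⋯ R_{i_p} = 0 for all choices of indices i_1, ..., i_p ∈ {1,...,l}. -/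
open Matrix BigOperators ComplexOrder

/-- For `ψ(X) = Σᵢ U Rᵢ* U* X Rᵢ`, `ψ^p ≡ 0` iff all `p`-fold
products `R_{i₁} ⋯ R_{i_p}` vanish. -/
theorem psi_pow_eq_zero_iff_products_vanish {m l : ℕ}
    (U : Matrix (Fin m) (Fin m) ℂ) (hU : U ∈ Matrix.unitaryGroup (Fin m) ℂ)
    (R : Fin l → Matrix (Fin m) (Fin m) ℂ)
    (ψ : Matrix (Fin m) (Fin m) ℂ → Matrix (Fin m) (Fin m) ℂ)
    (hψ : ∀ X, ψ X = ∑ i, U * (R i)ᴴ * Uᴴ * X * R i) (p : ℕ) :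
    (∀ X, ψ^[p] X = 0) ↔
      ∀ f : Fin p → Fin l, (List.ofFn fun k => R (f k)).prod = 0 := by
  have hUU : U * Uᴴ = 1 := by
    have := hU.2; rwa [Matrix.star_eq_conjTranspose] at this
  have hUU' : Uᴴ * U = 1 := by
    have := hU.1; rwa [Matrix.star_eq_conjTranspose] at this
  have key : ∀ (q : ℕ) (X : Matrix (Fin m) (Fin m) ℂ), ψ^[q] X =
      ∑ f : Fin q → Fin l,
        U * ((List.ofFn fun k => R (f k)).prod)ᴴ * Uᴴ * X
          * (List.ofFn fun k => R (f k)).prod := by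
    intro q
    induction q with
    | zero =>
      intro X
      simp only [Function.iterate_zero, id_eq]
      rw [Fintype.sum_subsingleton _ (fun i : Fin 0 => i.elim0)]
      simp only [List.ofFn_zero, List.prod_nil, Matrix.conjTranspose_one, Matrix.mul_one]
      rw [hUU, Matrix.one_mul]
    | succ q ih =>
      intro X
      rw [Function.iterate_succ_apply, ih (ψ X), hψ X,
        ← (Fin.consEquiv (fun _ : Fin (q+1) => Fin l)).sum_comp, Fintype.sum_prod_type,
        Finset.sum_comm]
      apply Finset.sum_congr rfl
      intro f _
      rw [Finset.mul_sum, Finset.sum_mul]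
      apply Finset.sum_congr rfl
      intro i _
      have hlist : (List.ofFn fun k : Fin (q+1) => R ((Fin.consEquiv (fun _ : Fin (q+1) => Fin l)) (i, f) k))
          = R i :: List.ofFn fun k : Fin q => R (f k) := by
        rw [List.ofFn_succ]; rfl
      rw [hlist, List.prod_cons, Matrix.conjTranspose_mul]
      simp only [Matrix.mul_assoc]
      rw [show Uᴴ * (U * ((R i)ᴴ * (Uᴴ * (X * (R i * (List.ofFn fun k => R (f k)).prod)))))
        = (R i)ᴴ * (Uᴴ * (X * (R i * (List.ofFn fun k => R (f k)).prod))) by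
          rw [← Matrix.mul_assoc Uᴴ U, hUU', Matrix.one_mul]]
  constructor
  · intro h f
    have h0 := key p U
    rw [h U] at h0
    have h1 : U * ∑ g : Fin p → Fin l,
        ((List.ofFn fun k => R (g k)).prod)ᴴ * (List.ofFn fun k => R (g k)).prod = 0 := by
      rw [Finset.mul_sum]
      refine Eq.trans (Finset.sum_congr rfl fun g _ => ?_) h0.symm
      simp only [Matrix.mul_assoc]
      rw [← Matrix.mul_assoc Uᴴ U, hUU', Matrix.one_mul]
    have hS : ∑ g : Fin p → Fin l,
        ((List.ofFn fun k => R (g k)).prod)ᴴ * (List.ofFn fun k => R (g k)).prod = 0 := by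
      calc _ = Uᴴ * (U * ∑ g : Fin p → Fin l,
            ((List.ofFn fun k => R (g k)).prod)ᴴ * (List.ofFn fun k => R (g k)).prod) := by
            rw [← Matrix.mul_assoc, hUU', Matrix.one_mul]
        _ = 0 := by rw [h1, Matrix.mul_zero]
    ext a b
    have hdiag : ∀ j : Fin m, ∑ g : Fin p → Fin l, ∑ i,
        Complex.normSq ((List.ofFn fun k => R (g k)).prod i j) = 0 := by
      intro j
      have hj := congrFun (congrFun hS j) j
      simp only [Matrix.sum_apply, Matrix.zero_apply] at hj
      have h2 : ∑ g : Fin p → Fin l, ∑ i,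
          (Complex.normSq ((List.ofFn fun k => R (g k)).prod i j) : ℂ) = 0 := by
        rw [← hj]
        apply Finset.sum_congr rfl
        intro g _
        rw [Matrix.mul_apply]
        apply Finset.sum_congr rfl
        intro i _
        rw [Matrix.conjTranspose_apply]
        rw [Complex.star_def]; exact_mod_cast Complex.normSq_eq_conj_mul_self
      exact_mod_cast h2
    have hnn : ∀ g ∈ (Finset.univ : Finset (Fin p → Fin l)), (0:ℝ) ≤ ∑ i,
        Complex.normSq ((List.ofFn fun k => R (g k)).prod i b) :=
      fun g _ => Finset.sum_nonneg fun i _ => Complex.normSq_nonneg _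
    have h3 := (Finset.sum_eq_zero_iff_of_nonneg hnn).mp (hdiag b) f (Finset.mem_univ f)
    have h4 := (Finset.sum_eq_zero_iff_of_nonneg
      (fun i _ => Complex.normSq_nonneg _)).mp h3 a (Finset.mem_univ a)
    simpa using Complex.normSq_eq_zero.mp h4
  · intro h X
    rw [key p X]
    apply Finset.sum_eq_zero
    intro f _
    rw [h f, Matrix.mul_zero]
end

section
/- Let U_A ∈ M_m(ℂ), U_B ∈ M_n(ℂ) be unitaries. If a bipartite quantum U_A⊗U_B-state ρ ∈ M_m(ℂ) ⊗ M_n(ℂ) is U_A⊗U_B-separable, i.e., ρ = Σ_k p_k (U_A ⊗ U_B)(|x_k⟩⟨x_k| ⊗ |y_k⟩⟨y_k|) with p_k ≥ 0 and Σ p_k = 1, then its partial transpose ρ^τ = (t ⊗ id)(ρ) satisfies that (conj(U_A) ⊗ U_B*) ρ^τ is positive semidefinite (U-PPT criterion). -/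
open Matrix Kronecker BigOperators ComplexOrder


lemma psd_vmv {ι : Type*} [Fintype ι] (v : ι → ℂ) :
    (Matrix.vecMulVec (star v) v).PosSemidef := by
  rw [posSemidef_iff_dotProduct_mulVec]
  constructor
  · ext i j
    simp [vecMulVec_apply, conjTranspose_apply, mul_comm]
  · intro z
    have h : star z ⬝ᵥ (Matrix.vecMulVec (star v) v *ᵥ z) = star (v ⬝ᵥ z) * (v ⬝ᵥ z) := by
      simp [vecMulVec_apply, mulVec, dotProduct, Finset.mul_sum, Finset.sum_mul,
        mul_comm, mul_left_comm, mul_assoc]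
    rw [h]
    exact star_mul_self_nonneg _


lemma psd_smul_real {ι : Type*} [Fintype ι] {M : Matrix ι ι ℂ} (hM : M.PosSemidef)
    {c : ℝ} (hc : 0 ≤ c) : ((c : ℂ) • M).PosSemidef := by
  rw [posSemidef_iff_dotProduct_mulVec]
  constructor
  · unfold Matrix.IsHermitian
    rw [conjTranspose_smul, hM.1.eq]
    congr 1
    simp [Complex.conj_ofReal]
  · intro z
    rw [Matrix.smul_mulVec, dotProduct_smul, smul_eq_mul]
    exact mul_nonneg (by exact_mod_cast hc) (hM.dotProduct_mulVec_nonneg z)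

/-- U-PPT criterion: if a bipartite quantum `U_A ⊗ U_B`-state is
`U_A ⊗ U_B`-separable, then `(conj(U_A) ⊗ U_B*) ρ^τ` is positive semidefinite,
where `ρ^τ` is the partial transpose in the first factor. -/
theorem separable_implies_UPPT {m n N : ℕ}
    (UA : Matrix (Fin m) (Fin m) ℂ) (UB : Matrix (Fin n) (Fin n) ℂ)
    (hUA : UA ∈ Matrix.unitaryGroup (Fin m) ℂ)
    (hUB : UB ∈ Matrix.unitaryGroup (Fin n) ℂ)
    (w : Fin N → ℝ) (hw : ∀ k, 0 ≤ w k) (hw1 : ∑ k, w k = 1)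
    (x : Fin N → Fin m → ℂ) (y : Fin N → Fin n → ℂ)
    (ρ : Matrix (Fin m × Fin n) (Fin m × Fin n) ℂ)
    (hρ : ρ = ∑ k, (w k : ℂ) •
      ((UA * Matrix.vecMulVec (x k) (star (x k))) ⊗ₖ
        (UB * Matrix.vecMulVec (y k) (star (y k))))) :
    (((UA.map (starRingEnd ℂ)) ⊗ₖ UBᴴ) *
      Matrix.of (fun p q : Fin m × Fin n => ρ (q.1, p.2) (p.1, q.2))).PosSemidef := by
  -- partial transpose as a sum
  have hτ : Matrix.of (fun p q : Fin m × Fin n => ρ (q.1, p.2) (p.1, q.2))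
      = ∑ k, (w k : ℂ) •
        ((UA * Matrix.vecMulVec (x k) (star (x k)))ᵀ ⊗ₖ
          (UB * Matrix.vecMulVec (y k) (star (y k)))) := by
    subst hρ
    ext p q
    simp [Matrix.sum_apply, -Matrix.transpose_mul]
  rw [hτ, Finset.mul_sum]
  have key : ∀ k, ((UA.map (starRingEnd ℂ)) ⊗ₖ UBᴴ) *
      ((UA * Matrix.vecMulVec (x k) (star (x k)))ᵀ ⊗ₖ
        (UB * Matrix.vecMulVec (y k) (star (y k))))
      = Matrix.vecMulVec (star (fun p : Fin m × Fin n => (UA *ᵥ x k) p.1 * star (y k p.2)))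
          (fun p : Fin m × Fin n => (UA *ᵥ x k) p.1 * star (y k p.2)) := by
    intro k
    rw [← Matrix.mul_kronecker_mul]
    have hA : UA.map (starRingEnd ℂ) * (UA * Matrix.vecMulVec (x k) (star (x k)))ᵀ
        = Matrix.vecMulVec (star (UA *ᵥ x k)) (UA *ᵥ x k) := by
      ext i j
      simp only [mul_apply, transpose_apply, map_apply, vecMulVec_apply, mulVec,
        dotProduct, Pi.star_apply, star_sum, star_mul', starRingEnd_apply,
        Finset.mul_sum, Finset.sum_mul]
      rw [Finset.sum_comm]
      refine Finset.sum_congr rfl fun r _ => Finset.sum_congr rfl fun s _ => ?_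
      ring
    have hB : UBᴴ * (UB * Matrix.vecMulVec (y k) (star (y k)))
        = Matrix.vecMulVec (y k) (star (y k)) := by
      have h1 : UBᴴ * UB = 1 := by
        simpa [Matrix.star_eq_conjTranspose] using hUB.1
      rw [← mul_assoc, h1, one_mul]
    rw [hA, hB]
    ext p q
    simp [vecMulVec_apply, mul_comm, mul_left_comm, mul_assoc]
  simp only [Matrix.mul_smul, key]
  refine Finset.sum_induction _ _ (fun A B hA hB => hA.add hB) Matrix.PosSemidef.zero
    (fun k _ => ?_)
  exact psd_smul_real (psd_vmv _) (hw k)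
end
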